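/- arXiv:1409.7585 — 2 statements merged into one kernel-verified Lean document; each statement's English description precedes it below -/
import Mathlib

section
/- Let m ≥ 3 be an integer, let 0 < b ≤ 1/(m−1) and put a := √(1−b²). Then the map f(λ) := (a·λ, b·λ^m) maps 𝔻 into the Euclidean unit ball 𝔹₂ ⊆ ℂ² and is an (m+1)-geodesic of 𝔹₂. -/
/-!
With `m = n + 3` and `a = √(1 - b²)`, the holomorphic map
`F(z) = (z₀ ^ m + m b a ^ (m - 2) z₁) / (a ^ (m - 2) (1 + (m - 1) b²))` satisfies `F ∘ f = λ ^ m`,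
a Blaschke product of degree `m`. It maps `𝔹₂` into `𝔻` because `|z₀| < √(1 - |z₁|²)` and
`y ↦ (1 - y²) ^ (m / 2)` lies below its tangent line at `y = b` on `[0, 1]`. With
`y₀ = 1 / √(m - 1) ≥ b`, the slope of the gap between the tangent and the function is
`m (ψ y - ψ b)` for `ψ y = y (1 - y²) ^ ((m - 2) / 2)`, which increases on `[0, y₀]` and decreases
on `[y₀, 1]`. So the gap is nonnegative on `[0, y₀]`, where it is minimal at `b`, and concave on
`[y₀, 1]`, where it is nonnegative at both ends; at `y = 1` it equals
`a ^ (m - 2) (1 - b) (1 - (m - 1) b) ≥ 0`.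
-/

open Complex Metric Set Filter

noncomputable section

/-- The open unit disc `𝔻` in `ℂ`. -/
def unitDisc : Set ℂ := Metric.ball (0 : ℂ) 1

/-- The Möbius function `m_α(λ) = (λ - α)/(1 - conj α · λ)`. -/
def mobius (a z : ℂ) : ℂ := (z - a) / (1 - (starRingEnd ℂ) a * z)

/-- `B` agrees on the unit disc with a finite Blaschke product
`ζ · ∏_{j=1}^k m_{α_j}` of degree `k` (here `ζ ∈ 𝕋`, `α_j ∈ 𝔻`). -/
def IsBlaschkeOn (B : ℂ → ℂ) (k : ℕ) : Prop :=
  ∃ (ζ : ℂ) (α : Fin k → ℂ), ‖ζ‖ = 1 ∧ (∀ j, ‖α j‖ < 1) ∧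
    ∀ z ∈ unitDisc, B z = ζ * ∏ j, mobius (α j) z

variable {E : Type*} [NormedAddCommGroup E] [NormedSpace ℂ E]

/-- `f` is a weak `m`-extremal for the nodes `lam` with respect to the domain `D`:
there is no map `h`, holomorphic on an open neighborhood of the closed unit disc
with values in `D`, interpolating `f` at all the nodes. -/
def WeakExtremalFor (D : Set E) (f : ℂ → E) {m : ℕ} (lam : Fin m → ℂ) : Prop :=
  ¬ ∃ (U : Set ℂ) (h : ℂ → E), IsOpen U ∧ Metric.closedBall (0 : ℂ) 1 ⊆ U ∧
      DifferentiableOn ℂ h U ∧ Set.MapsTo h U D ∧ ∀ j, h (lam j) = f (lam j)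

/-- `f` is a weak `m`-extremal of `D`: it is a weak `m`-extremal for some
pairwise distinct nodes in the unit disc. -/
def IsWeakExtremal (D : Set E) (f : ℂ → E) (m : ℕ) : Prop :=
  ∃ lam : Fin m → ℂ, Function.Injective lam ∧ (∀ j, lam j ∈ unitDisc) ∧
    WeakExtremalFor D f lam

/-- `f` is an `m`-extremal of `D`: it is a weak `m`-extremal for every choice of
pairwise distinct nodes in the unit disc. -/
def IsExtremal (D : Set E) (f : ℂ → E) (m : ℕ) : Prop :=
  ∀ lam : Fin m → ℂ, Function.Injective lam → (∀ j, lam j ∈ unitDisc) →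
    WeakExtremalFor D f lam

/-- `f` is an `m`-geodesic of `D`: there is a holomorphic `F : D → 𝔻` such that
`F ∘ f` is a non-constant Blaschke product of degree at most `m - 1`. -/
def IsGeodesic (D : Set E) (f : ℂ → E) (m : ℕ) : Prop :=
  ∃ F : E → ℂ, DifferentiableOn ℂ F D ∧ Set.MapsTo F D unitDisc ∧
    ∃ k : ℕ, 1 ≤ k ∧ k ≤ m - 1 ∧ IsBlaschkeOn (fun z => F (f z)) k

/-- A domain `D ⊆ ℂⁿ` is `k`-balanced (quasi-balanced) if
`(λ^{k₁} z₁, …, λ^{k_n} z_n) ∈ D` for all `λ` in the closed unit disc, `z ∈ D`. -/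
def QuasiBalanced {n : ℕ} (k : Fin n → ℕ) (D : Set (Fin n → ℂ)) : Prop :=
  ∀ l : ℂ, ‖l‖ ≤ 1 → ∀ z ∈ D, (fun j => l ^ k j * z j) ∈ D

/-- The complex ellipsoid `E(p) = {z ∈ ℂⁿ : Σ_j |z_j|^{2 p_j} < 1}`. -/
def ellipsoid {n : ℕ} (p : Fin n → ℝ) : Set (Fin n → ℂ) :=
  {z | ∑ j, ‖z j‖ ^ (2 * p j) < 1}

/-- The Euclidean unit ball `𝔹_n ⊆ ℂⁿ`. -/
def euclideanBall (n : ℕ) : Set (Fin n → ℂ) :=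
  {z | ∑ j, ‖z j‖ ^ 2 < 1}

lemma hasDerivAt_mul_one_sub_pow_succ (k : ℕ) (v : ℝ) :
    HasDerivAt (fun v : ℝ => v * (1 - v) ^ (k + 1)) ((1 - v) ^ k * (1 - (k + 2) * v)) v := by
  refine ((hasDerivAt_id' v).fun_mul
    (((hasDerivAt_id' v).const_sub 1).fun_pow (k + 1))).congr_deriv ?_
  push_cast
  ring

lemma monotoneOn_mul_one_sub_pow_succ (k : ℕ) :
    MonotoneOn (fun v : ℝ => v * (1 - v) ^ (k + 1)) (Icc 0 (1 / ((k : ℝ) + 2))) := by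
  refine monotoneOn_of_hasDerivWithinAt_nonneg (convex_Icc _ _) (by fun_prop)
    (fun v _ => (hasDerivAt_mul_one_sub_pow_succ k v).hasDerivWithinAt) fun v hv => ?_
  rw [interior_Icc, mem_Ioo, lt_div_iff₀ (by positivity)] at hv
  have : v ≤ 1 := by nlinarith
  exact mul_nonneg (pow_nonneg (by linarith) _) (by linarith)

lemma antitoneOn_mul_one_sub_pow_succ (k : ℕ) :
    AntitoneOn (fun v : ℝ => v * (1 - v) ^ (k + 1)) (Icc (1 / ((k : ℝ) + 2)) 1) := by
  refine antitoneOn_of_hasDerivWithinAt_nonpos (convex_Icc _ _) (by fun_prop)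
    (fun v _ => (hasDerivAt_mul_one_sub_pow_succ k v).hasDerivWithinAt) fun v hv => ?_
  rw [interior_Icc, mem_Ioo, div_lt_iff₀ (by positivity)] at hv
  exact mul_nonpos_of_nonneg_of_nonpos (pow_nonneg (by linarith) _) (by linarith)

lemma mul_sqrt_one_sub_sq_pow_sq (k : ℕ) {y : ℝ} (hy : y ^ 2 ≤ 1) :
    (y * √(1 - y ^ 2) ^ (k + 1)) ^ 2 = y ^ 2 * (1 - y ^ 2) ^ (k + 1) := by
  rw [mul_pow, ← pow_mul, mul_comm (k + 1), pow_mul, Real.sq_sqrt (by linarith)]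

lemma monotoneOn_mul_sqrt_one_sub_sq_pow (k : ℕ) :
    MonotoneOn (fun y : ℝ => y * √(1 - y ^ 2) ^ (k + 1)) (Icc 0 √(1 / ((k : ℝ) + 2))) := by
  intro y hy z hz hyz
  have hsq : ∀ x ∈ Icc (0 : ℝ) √(1 / ((k : ℝ) + 2)), x ^ 2 ∈ Icc 0 (1 / ((k : ℝ) + 2)) :=
    fun x hx => ⟨sq_nonneg x, (Real.le_sqrt hx.1 (by positivity)).1 hx.2⟩
  have hle : ∀ x ∈ Icc (0 : ℝ) √(1 / ((k : ℝ) + 2)), x ^ 2 ≤ 1 := fun x hx =>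
    (hsq x hx).2.trans (div_le_one_of_le₀ (by linarith) (by positivity))
  rw [← sq_le_sq₀ (mul_nonneg hy.1 (by positivity)) (mul_nonneg hz.1 (by positivity)),
    mul_sqrt_one_sub_sq_pow_sq k (hle y hy), mul_sqrt_one_sub_sq_pow_sq k (hle z hz)]
  exact monotoneOn_mul_one_sub_pow_succ k (hsq y hy) (hsq z hz) (pow_le_pow_left₀ hy.1 hyz 2)

lemma antitoneOn_mul_sqrt_one_sub_sq_pow (k : ℕ) :
    AntitoneOn (fun y : ℝ => y * √(1 - y ^ 2) ^ (k + 1)) (Icc √(1 / ((k : ℝ) + 2)) 1) := by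
  intro y hy z hz hyz
  have hsq : ∀ x ∈ Icc √(1 / ((k : ℝ) + 2)) 1, x ^ 2 ∈ Icc (1 / ((k : ℝ) + 2)) 1 := fun x hx =>
    have hx0 : 0 ≤ x := (Real.sqrt_nonneg _).trans hx.1
    ⟨(Real.sqrt_le_left hx0).1 hx.1, pow_le_one₀ hx0 hx.2⟩
  have hy0 : 0 ≤ y := (Real.sqrt_nonneg _).trans hy.1
  rw [← sq_le_sq₀ (mul_nonneg (hy0.trans hyz) (by positivity)) (mul_nonneg hy0 (by positivity)),
    mul_sqrt_one_sub_sq_pow_sq k (hsq y hy).2, mul_sqrt_one_sub_sq_pow_sq k (hsq z hz).2]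
  exact antitoneOn_mul_one_sub_pow_succ k (hsq y hy) (hsq z hz) (pow_le_pow_left₀ hy0 hyz 2)

lemma hasDerivAt_sqrt_one_sub_sq_pow (n : ℕ) {y : ℝ} (hy : y ∈ Ioo (-1) 1) :
    HasDerivAt (fun y : ℝ => √(1 - y ^ 2) ^ (n + 3))
      (-((n + 3) * (y * √(1 - y ^ 2) ^ (n + 1)))) y := by
  have hpos : 0 < 1 - y ^ 2 := by nlinarith [hy.1, hy.2]
  have hsqrt := ((hasDerivAt_pow 2 y).const_sub 1).sqrt hpos.ne'
  refine (hsqrt.fun_pow (n + 3)).congr_deriv ?_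
  have hs : √(1 - y ^ 2) ≠ 0 := (Real.sqrt_pos.2 hpos).ne'
  field_simp
  push_cast
  ring

/-- The gap between the tangent line at `b` of `y ↦ (1 - y²) ^ ((n + 3) / 2)` and that function. -/
def tangentGap (n : ℕ) (b y : ℝ) : ℝ :=
  √(1 - b ^ 2) ^ (n + 1) * (1 + (n + 2) * b ^ 2 - (n + 3) * b * y) - √(1 - y ^ 2) ^ (n + 3)

lemma hasDerivAt_tangentGap (n : ℕ) (b : ℝ) {y : ℝ} (hy : y ∈ Ioo (-1) 1) :
    HasDerivAt (tangentGap n b)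
      ((n + 3) * (y * √(1 - y ^ 2) ^ (n + 1) - b * √(1 - b ^ 2) ^ (n + 1))) y := by
  have hline := (((hasDerivAt_id' y).const_mul ((n + 3) * b)).const_sub
    (1 + (n + 2) * b ^ 2)).const_mul (√(1 - b ^ 2) ^ (n + 1))
  refine (hline.sub (hasDerivAt_sqrt_one_sub_sq_pow n hy)).congr_deriv ?_
  ring

lemma continuous_tangentGap (n : ℕ) (b : ℝ) : Continuous (tangentGap n b) := by
  unfold tangentGap
  fun_prop

lemma tangentGap_self (n : ℕ) {b : ℝ} (hb : b ^ 2 ≤ 1) : tangentGap n b b = 0 := by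
  have ha : √(1 - b ^ 2) ^ 2 = 1 - b ^ 2 := Real.sq_sqrt (by linarith)
  rw [tangentGap, pow_add _ (n + 1) 2, ha]
  ring

lemma tangentGap_one_nonneg (n : ℕ) {b : ℝ} (hb0 : 0 ≤ b) (hb1 : (n + 2) * b ≤ 1) :
    0 ≤ tangentGap n b 1 := by
  have hfactor : 1 + (n + 2) * b ^ 2 - (n + 3) * b * 1 = (1 - b) * (1 - (n + 2) * b) := by ring
  rw [tangentGap, hfactor, one_pow, sub_self, Real.sqrt_zero, zero_pow (by omega), sub_zero]
  have : b ≤ 1 := by nlinarith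
  exact mul_nonneg (by positivity) (mul_nonneg (by linarith) (by linarith))

lemma sqrt_one_div_nat_add_two_le_one (n : ℕ) : √(1 / ((n : ℝ) + 2)) ≤ 1 :=
  Real.sqrt_le_one.2 (div_le_one_of_le₀ (by linarith [n.cast_nonneg (α := ℝ)]) (by positivity))

lemma mem_Icc_sqrt_of_mul_le_one (n : ℕ) {b : ℝ} (hb0 : 0 ≤ b) (hb1 : (n + 2) * b ≤ 1) :
    b ∈ Icc 0 √(1 / ((n : ℝ) + 2)) := by
  refine ⟨hb0, (Real.le_sqrt hb0 (by positivity)).2 ?_⟩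
  rw [le_div_iff₀ (by positivity)]
  nlinarith

lemma tangentGap_nonneg_of_le_sqrt (n : ℕ) {b y : ℝ}
    (hb : b ∈ Icc 0 √(1 / ((n : ℝ) + 2))) (hy : y ∈ Icc 0 √(1 / ((n : ℝ) + 2))) :
    0 ≤ tangentGap n b y := by
  have hy₀ := sqrt_one_div_nat_add_two_le_one n
  have hψ := monotoneOn_mul_sqrt_one_sub_sq_pow n
  have hderiv : ∀ t ∈ Ioo 0 √(1 / ((n : ℝ) + 2)), HasDerivAt (tangentGap n b)
      ((n + 3) * (t * √(1 - t ^ 2) ^ (n + 1) - b * √(1 - b ^ 2) ^ (n + 1))) t :=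
    fun t ht => hasDerivAt_tangentGap n b ⟨by linarith [ht.1], ht.2.trans_le hy₀⟩
  rw [← tangentGap_self n (b := b) (pow_le_one₀ hb.1 (hb.2.trans hy₀))]
  rcases le_total y b with hyb | hby
  · refine antitoneOn_of_hasDerivWithinAt_nonpos (convex_Icc 0 b) (f' := fun t =>
      (n + 3) * (t * √(1 - t ^ 2) ^ (n + 1) - b * √(1 - b ^ 2) ^ (n + 1)))
      (continuous_tangentGap n b).continuousOn (fun t ht => ?_) (fun t ht => ?_)
      ⟨hy.1, hyb⟩ ⟨hb.1, le_rfl⟩ hyb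
    all_goals rw [interior_Icc] at ht
    · exact (hderiv t ⟨ht.1, ht.2.trans_le hb.2⟩).hasDerivWithinAt
    · exact mul_nonpos_of_nonneg_of_nonpos (by positivity)
        (sub_nonpos.2 (hψ ⟨ht.1.le, ht.2.le.trans hb.2⟩ hb ht.2.le))
  · refine monotoneOn_of_hasDerivWithinAt_nonneg (convex_Icc b _) (f' := fun t =>
      (n + 3) * (t * √(1 - t ^ 2) ^ (n + 1) - b * √(1 - b ^ 2) ^ (n + 1)))
      (continuous_tangentGap n b).continuousOn (fun t ht => ?_) (fun t ht => ?_)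
      ⟨le_rfl, hb.2⟩ ⟨hby, hy.2⟩ hby
    all_goals rw [interior_Icc] at ht
    · exact (hderiv t ⟨hb.1.trans_lt ht.1, ht.2⟩).hasDerivWithinAt
    · exact mul_nonneg (by positivity)
        (sub_nonneg.2 (hψ hb ⟨hb.1.trans ht.1.le, ht.2.le⟩ ht.1.le))

lemma tangentGap_nonneg_of_sqrt_le (n : ℕ) {b y : ℝ} (hb0 : 0 ≤ b) (hb1 : (n + 2) * b ≤ 1)
    (hy : y ∈ Icc √(1 / ((n : ℝ) + 2)) 1) : 0 ≤ tangentGap n b y := by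
  have hψ := antitoneOn_mul_sqrt_one_sub_sq_pow n
  have hconcave : ConcaveOn ℝ (Icc √(1 / ((n : ℝ) + 2)) 1) (tangentGap n b) := by
    have hderiv : ∀ t ∈ interior (Icc √(1 / ((n : ℝ) + 2)) 1), HasDerivAt (tangentGap n b)
        ((n + 3) * (t * √(1 - t ^ 2) ^ (n + 1) - b * √(1 - b ^ 2) ^ (n + 1))) t := by
      rw [interior_Icc]
      exact fun t ht => hasDerivAt_tangentGap n b
        ⟨by linarith [ht.1, Real.sqrt_nonneg (1 / ((n : ℝ) + 2))], ht.2⟩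
    refine AntitoneOn.concaveOn_of_deriv (convex_Icc _ _) (continuous_tangentGap n b).continuousOn
      (fun t ht => (hderiv t ht).differentiableAt.differentiableWithinAt) fun s hs t ht hst => ?_
    rw [(hderiv s hs).deriv, (hderiv t ht).deriv]
    rw [interior_Icc] at hs ht
    have := hψ (Ioo_subset_Icc_self hs) (Ioo_subset_Icc_self ht) hst
    gcongr
  have hy₀ := sqrt_one_div_nat_add_two_le_one n
  have hy' : y ∈ segment ℝ √(1 / ((n : ℝ) + 2)) 1 := by rwa [segment_eq_Icc hy₀]
  calc 0 ≤ min (tangentGap n b √(1 / ((n : ℝ) + 2))) (tangentGap n b 1) :=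
        le_min (tangentGap_nonneg_of_le_sqrt n (mem_Icc_sqrt_of_mul_le_one n hb0 hb1)
          ⟨Real.sqrt_nonneg _, le_rfl⟩) (tangentGap_one_nonneg n hb0 hb1)
    _ ≤ tangentGap n b y := hconcave.ge_on_segment ⟨le_rfl, hy₀⟩ ⟨hy₀, le_rfl⟩ hy'

lemma tangentGap_nonneg (n : ℕ) {b y : ℝ} (hb0 : 0 ≤ b) (hb1 : (n + 2) * b ≤ 1) (hy0 : 0 ≤ y)
    (hy1 : y ≤ 1) : 0 ≤ tangentGap n b y := by
  rcases le_total y √(1 / ((n : ℝ) + 2)) with hy | hy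
  · exact tangentGap_nonneg_of_le_sqrt n (mem_Icc_sqrt_of_mul_le_one n hb0 hb1) ⟨hy0, hy⟩
  · exact tangentGap_nonneg_of_sqrt_le n hb0 hb1 ⟨hy, hy1⟩

lemma pow_add_mul_lt_of_sq_add_sq_lt_one (n : ℕ) {b x y : ℝ} (hb0 : 0 ≤ b)
    (hb1 : (n + 2) * b ≤ 1) (hx : 0 ≤ x) (hy : 0 ≤ y) (hxy : x ^ 2 + y ^ 2 < 1) :
    x ^ (n + 3) + (n + 3) * b * √(1 - b ^ 2) ^ (n + 1) * y
      < √(1 - b ^ 2) ^ (n + 1) * (1 + (n + 2) * b ^ 2) := by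
  have hx' : x < √(1 - y ^ 2) := (Real.lt_sqrt hx).2 (by linarith)
  have hgap := tangentGap_nonneg n hb0 hb1 hy (by nlinarith)
  rw [tangentGap] at hgap
  linarith [pow_lt_pow_left₀ hx' hx (by omega : n + 3 ≠ 0)]

def ballToDisc (n : ℕ) (b : ℝ) (z : Fin 2 → ℂ) : ℂ :=
  (z 0 ^ (n + 3) + (((n + 3) * b * √(1 - b ^ 2) ^ (n + 1) : ℝ) : ℂ) * z 1) /
    ((√(1 - b ^ 2) ^ (n + 1) * (1 + (n + 2) * b ^ 2) : ℝ) : ℂ)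

lemma differentiable_ballToDisc (n : ℕ) (b : ℝ) : Differentiable ℂ (ballToDisc n b) := by
  unfold ballToDisc
  fun_prop

lemma mapsTo_ballToDisc (n : ℕ) {b : ℝ} (hb0 : 0 ≤ b) (hb1 : (n + 2) * b ≤ 1) :
    MapsTo (ballToDisc n b) (euclideanBall 2) unitDisc := by
  intro z hz
  simp only [euclideanBall, mem_ofPred_eq, Fin.sum_univ_two] at hz
  have hb : b ^ 2 < 1 := by nlinarith
  have hden : 0 < √(1 - b ^ 2) ^ (n + 1) * (1 + (n + 2) * b ^ 2) := by
    have := Real.sqrt_pos.2 (sub_pos.2 hb)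
    positivity
  rw [unitDisc, mem_ball_zero_iff, ballToDisc, norm_div, Complex.norm_real,
    Real.norm_of_nonneg hden.le, div_lt_one hden]
  calc _ ≤ ‖z 0‖ ^ (n + 3) + (n + 3) * b * √(1 - b ^ 2) ^ (n + 1) * ‖z 1‖ := by
        refine (norm_add_le _ _).trans_eq ?_
        rw [norm_mul, norm_pow, Complex.norm_real, Real.norm_of_nonneg (by positivity)]
    _ < _ := pow_add_mul_lt_of_sq_add_sq_lt_one n hb0 hb1 (norm_nonneg _) (norm_nonneg _) hz

lemma ballToDisc_geodesic_eq_pow (n : ℕ) {b : ℝ} (hb : b ^ 2 < 1) (z : ℂ) :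
    ballToDisc n b ![(√(1 - b ^ 2) : ℂ) * z, (b : ℂ) * z ^ (n + 3)] = z ^ (n + 3) := by
  have ha : (√(1 - b ^ 2) : ℂ) ^ 2 = 1 - b ^ 2 := by
    exact_mod_cast Real.sq_sqrt (sub_pos.2 hb).le
  have hden : 0 < √(1 - b ^ 2) ^ (n + 1) * (1 + (n + 2) * b ^ 2) := by
    have := Real.sqrt_pos.2 (sub_pos.2 hb)
    positivity
  simp only [ballToDisc, Matrix.cons_val_zero, Matrix.cons_val_one]
  rw [div_eq_iff (by exact_mod_cast hden.ne')]
  push_cast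
  rw [mul_pow, pow_add (√(1 - b ^ 2) : ℂ) (n + 1) 2, ha]
  ring

lemma isBlaschkeOn_pow (k : ℕ) : IsBlaschkeOn (fun z => z ^ k) k :=
  ⟨1, fun _ => 0, norm_one, fun _ => by simp, fun z _ => by simp [mobius]⟩

lemma mapsTo_unitDisc_euclideanBall {a b : ℝ} (hab : a ^ 2 + b ^ 2 ≤ 1) {m : ℕ} (hm : m ≠ 0) :
    MapsTo (fun z => ![(a : ℂ) * z, (b : ℂ) * z ^ m]) unitDisc (euclideanBall 2) := by
  intro z hz
  rw [unitDisc, mem_ball_zero_iff] at hz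
  simp only [euclideanBall, mem_ofPred_eq, Fin.sum_univ_two, Matrix.cons_val_zero,
    Matrix.cons_val_one, norm_mul, norm_pow, Complex.norm_real, Real.norm_eq_abs, mul_pow, sq_abs]
  have hzm : (‖z‖ ^ m) ^ 2 ≤ ‖z‖ ^ 2 :=
    pow_le_pow_left₀ (by positivity) (pow_le_of_le_one (norm_nonneg z) hz.le hm) 2
  calc a ^ 2 * ‖z‖ ^ 2 + b ^ 2 * (‖z‖ ^ m) ^ 2 ≤ (a ^ 2 + b ^ 2) * ‖z‖ ^ 2 := by
        nlinarith [mul_le_mul_of_nonneg_left hzm (sq_nonneg b)]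
    _ ≤ ‖z‖ ^ 2 := mul_le_of_le_one_left (sq_nonneg _) hab
    _ < 1 := by nlinarith [norm_nonneg z]

/-- For `m ≥ 3`, `0 < b ≤ 1/(m-1)` and `a = √(1-b²)`, the map
`f(λ) = (aλ, bλ^m)` maps `𝔻` into the Euclidean unit ball `𝔹₂ ⊆ ℂ²` and is an
`(m+1)`-geodesic of `𝔹₂`. -/
theorem special_map_is_geodesic_of_ball
    (m : ℕ) (hm : 3 ≤ m) (b : ℝ) (hb0 : 0 < b) (hb1 : b ≤ 1 / ((m : ℝ) - 1))
    (a : ℝ) (ha : a = Real.sqrt (1 - b ^ 2))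
    (f : ℂ → Fin 2 → ℂ) (hf : f = fun z => ![(a : ℂ) * z, (b : ℂ) * z ^ m]) :
    Set.MapsTo f unitDisc (euclideanBall 2) ∧ IsGeodesic (euclideanBall 2) f (m + 1) := by
  obtain ⟨n, rfl⟩ : ∃ n, m = n + 3 := ⟨m - 3, by omega⟩
  have hb : ((n : ℝ) + 2) * b ≤ 1 := by
    rwa [show ((n + 3 : ℕ) : ℝ) - 1 = n + 2 by push_cast; ring, le_div_iff₀ (by positivity),
      mul_comm] at hb1
  have hb2 : b ^ 2 < 1 := by nlinarith
  subst ha hf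
  refine ⟨mapsTo_unitDisc_euclideanBall ?_ (by omega), ballToDisc n b,
    (differentiable_ballToDisc n b).differentiableOn, mapsTo_ballToDisc n hb0.le hb,
    n + 3, by omega, by omega, ?_⟩
  · rw [Real.sq_sqrt (by linarith)]
    linarith
  · simpa only [ballToDisc_geodesic_eq_pow n hb2] using isBlaschkeOn_pow (n + 3)
end
end

section
/- Let f : 𝔻 → 𝔻ⁿ be a holomorphic map and let m ≥ 2 be an integer. Then the following are equivalent: (a) f is a weak m-extremal of 𝔻ⁿ; (b) f is an m-extremal of 𝔻ⁿ; (c) f is an m-geodesic of 𝔻ⁿ; (d) some coordinate function f_j is a non-constant Blaschke product of degree at most m−1. -/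
open Complex Metric Set Filter

noncomputable section

variable {E : Type*} [NormedAddCommGroup E] [NormedSpace ℂ E]

/-! A coordinate projection gives (d) ⇒ (c), and (b) ⇒ (a) is trivial. For (c) ⇒ (b), in any
domain `D`: if `F ∘ f = B` is a Blaschke product of degree `k < m` and `h ∈ O(cl 𝔻, D)` interpolated
`f` at `m` nodes, then `F ∘ h ∈ O(cl 𝔻, 𝔻)` would interpolate `B` at `k + 1` nodes. The Schur
algorithm rules this out: the reduction `g ↦ (m_{g λ₀} ∘ g) / m_{λ₀}` keeps `O(cl 𝔻, 𝔻)` by the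
maximum principle and lowers the degree of `B` by one, until a unimodular constant would be
interpolated by a function with values in `𝔻`.

For (a) ⇒ (d), some coordinate `f_j` is a weak `m`-extremal of `𝔻`. Run the Schur algorithm on
`f_j` at the nodes; each reduction is again a self-map of `𝔻` by Schwarz–Pick, unless it is a
unimodular constant. If that happens after `k < m` steps, undoing the steps exhibits `f_j` as a
Blaschke product of degree `k`; otherwise an interpolant in `O(cl 𝔻, 𝔻)` of the last reduction
lifts back through the steps to one of `f_j`. Both directions use that `m_a ∘ B` is again a
Blaschke product of the same degree, which is proved by factoring its numerator. -/

open Topology ComplexConjugate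

theorem mem_unitDisc {z : ℂ} : z ∈ unitDisc ↔ ‖z‖ < 1 := mem_ball_zero_iff

theorem norm_multiset_prod_map {α ι : Type*} [SeminormedCommRing α] [NormMulClass α]
    [NormOneClass α] (s : Multiset ι) (f : ι → α) :
    ‖(s.map f).prod‖ = (s.map fun i => ‖f i‖).prod := by
  rw [← normHom_apply, map_multiset_prod, Multiset.map_map]
  rfl

theorem norm_lt_of_forall_mem_frontier_norm_lt {F : Type*} [NormedAddCommGroup F]
    [NormedSpace ℂ F] {f : ℂ → F} {U : Set ℂ} (hU : Bornology.IsBounded U) (hne : U.Nonempty)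
    (hd : DiffContOnCl ℂ f U) {C : ℝ} (hC : ∀ z ∈ frontier U, ‖f z‖ < C) {z : ℂ}
    (hz : z ∈ closure U) : ‖f z‖ < C :=
  let ⟨w, hw, hmax⟩ := Complex.exists_mem_frontier_isMaxOn_norm hU hne hd
  (hmax hz).trans_lt (hC w hw)

theorem sq_norm_one_sub_conj_mul_sub_sq_norm_sub (a z : ℂ) :
    ‖1 - conj a * z‖ ^ 2 - ‖z - a‖ ^ 2 = (1 - ‖a‖ ^ 2) * (1 - ‖z‖ ^ 2) := by
  simp only [Complex.sq_norm, Complex.normSq_apply, Complex.sub_re, Complex.sub_im,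
    Complex.mul_re, Complex.mul_im, Complex.one_re, Complex.one_im, Complex.conj_re,
    Complex.conj_im]
  ring

theorem one_sub_conj_mul_ne_zero {a z : ℂ} (ha : ‖a‖ < 1) (hz : ‖z‖ ≤ 1) :
    1 - conj a * z ≠ 0 := by
  rw [sub_ne_zero, ne_comm]
  refine ne_of_apply_ne norm (ne_of_lt ?_)
  rw [norm_mul, Complex.norm_conj, norm_one]
  nlinarith [norm_nonneg a, norm_nonneg z]

theorem isOpen_setOf_one_sub_conj_mul_ne_zero (a : ℂ) : IsOpen {z : ℂ | 1 - conj a * z ≠ 0} :=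
  isOpen_ne_fun (by fun_prop) continuous_const

theorem prod_one_sub_conj_mul_ne_zero {s : Multiset ℂ} (hs : ∀ α ∈ s, ‖α‖ < 1) {z : ℂ}
    (hz : ‖z‖ ≤ 1) : (s.map fun α => 1 - conj α * z).prod ≠ 0 :=
  Multiset.prod_ne_zero fun h => by
    obtain ⟨α, hα, h0⟩ := Multiset.mem_map.1 h
    exact one_sub_conj_mul_ne_zero (hs α hα) hz h0

@[simp] theorem mobius_self (a : ℂ) : mobius a a = 0 := by simp [mobius]

@[simp] theorem mobius_zero_right (a : ℂ) : mobius a 0 = -a := by simp [mobius]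

theorem DifferentiableOn.mobius_comp {U : Set ℂ} {g : ℂ → ℂ} {a : ℂ}
    (hg : DifferentiableOn ℂ g U) (hU : ∀ z ∈ U, 1 - conj a * g z ≠ 0) :
    DifferentiableOn ℂ (fun z => mobius a (g z)) U :=
  (hg.sub_const a).div ((differentiableOn_const 1).sub (hg.const_mul _)) hU

section MobiusNorm

variable {a z : ℂ} (ha : ‖a‖ < 1)
include ha

theorem norm_sub_lt_norm_one_sub_conj_mul (hz : ‖z‖ < 1) : ‖z - a‖ < ‖1 - conj a * z‖ := by
  rw [← sq_lt_sq₀ (norm_nonneg _) (norm_nonneg _)]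
  nlinarith [sq_norm_one_sub_conj_mul_sub_sq_norm_sub a z,
    mul_pos (sub_pos.2 (pow_lt_one₀ (norm_nonneg a) ha two_ne_zero))
      (sub_pos.2 (pow_lt_one₀ (norm_nonneg z) hz two_ne_zero))]

theorem norm_sub_le_norm_one_sub_conj_mul (hz : ‖z‖ ≤ 1) : ‖z - a‖ ≤ ‖1 - conj a * z‖ := by
  rw [← sq_le_sq₀ (norm_nonneg _) (norm_nonneg _)]
  nlinarith [sq_norm_one_sub_conj_mul_sub_sq_norm_sub a z,
    mul_nonneg (sub_nonneg.2 (pow_le_one₀ (n := 2) (norm_nonneg a) ha.le))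
      (sub_nonneg.2 (pow_le_one₀ (n := 2) (norm_nonneg z) hz))]

theorem norm_one_sub_conj_mul_le_norm_sub (hz : 1 ≤ ‖z‖) : ‖1 - conj a * z‖ ≤ ‖z - a‖ := by
  rw [← sq_le_sq₀ (norm_nonneg _) (norm_nonneg _)]
  nlinarith [sq_norm_one_sub_conj_mul_sub_sq_norm_sub a z,
    mul_nonneg (sub_nonneg.2 (pow_le_one₀ (n := 2) (norm_nonneg a) ha.le))
      (sub_nonneg.2 (one_le_pow₀ hz : 1 ≤ ‖z‖ ^ 2))]

theorem norm_mobius_lt_one (hz : ‖z‖ < 1) : ‖mobius a z‖ < 1 := by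
  rw [mobius, norm_div, div_lt_one (norm_pos_iff.2 (one_sub_conj_mul_ne_zero ha hz.le))]
  exact norm_sub_lt_norm_one_sub_conj_mul ha hz

theorem norm_mobius_le_one (hz : ‖z‖ ≤ 1) : ‖mobius a z‖ ≤ 1 := by
  rw [mobius, norm_div, div_le_one (norm_pos_iff.2 (one_sub_conj_mul_ne_zero ha hz))]
  exact norm_sub_le_norm_one_sub_conj_mul ha hz

theorem norm_mobius_eq_one (hz : ‖z‖ = 1) : ‖mobius a z‖ = 1 := by
  rw [mobius, norm_div, div_eq_one_iff_eq (norm_pos_iff.2 (one_sub_conj_mul_ne_zero ha hz.le)).ne']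
  exact (norm_sub_le_norm_one_sub_conj_mul ha hz.le).antisymm
    (norm_one_sub_conj_mul_le_norm_sub ha hz.ge)

theorem mobius_eq_zero_iff (hz : ‖z‖ ≤ 1) : mobius a z = 0 ↔ z = a := by
  rw [mobius, div_eq_zero_iff, sub_eq_zero, or_iff_left (one_sub_conj_mul_ne_zero ha hz)]

theorem mobius_neg_mobius (hz : ‖z‖ ≤ 1) : mobius (-a) (mobius a z) = z := by
  have hd := one_sub_conj_mul_ne_zero ha hz
  have hd' : 1 - conj a * a ≠ 0 := one_sub_conj_mul_ne_zero ha ha.le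
  have hden : 1 - conj (-a) * mobius a z = (1 - conj a * a) / (1 - conj a * z) := by
    rw [mobius, map_neg]
    field_simp
    ring
  rw [mobius, hden, mobius, sub_neg_eq_add, div_add' _ _ _ hd, div_div_div_cancel_right₀ hd,
    div_eq_iff hd']
  ring

end MobiusNorm

def finiteBlaschke (ζ : ℂ) (s : Multiset ℂ) (z : ℂ) : ℂ := ζ * (s.map fun α => mobius α z).prod

theorem finiteBlaschke_eq_div (ζ : ℂ) (s : Multiset ℂ) (z : ℂ) :
    finiteBlaschke ζ s z =
      ζ * (s.map fun α => z - α).prod / (s.map fun α => 1 - conj α * z).prod := by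
  rw [finiteBlaschke, mul_div_assoc, ← Multiset.prod_map_div]
  rfl

theorem pow_card_mul_conj_prod_inv_sub {z : ℂ} (hz : z ≠ 0) (t : Multiset ℂ) :
    z ^ Multiset.card t * conj (t.map fun β => (conj z)⁻¹ - β).prod =
      (t.map fun β => 1 - conj β * z).prod := by
  induction t using Multiset.induction_on with
  | empty => simp
  | cons β t ih =>
    simp only [Multiset.card_cons, Multiset.map_cons, Multiset.prod_cons, map_mul, ← ih]
    rw [map_sub, map_inv₀, Complex.conj_conj]
    field_simp
    ring

theorem pow_card_mul_conj_prod_one_sub {z : ℂ} (hz : z ≠ 0) (t : Multiset ℂ) :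
    z ^ Multiset.card t * conj (t.map fun β => 1 - conj β * (conj z)⁻¹).prod =
      (t.map fun β => z - β).prod := by
  induction t using Multiset.induction_on with
  | empty => simp
  | cons β t ih =>
    simp only [Multiset.card_cons, Multiset.map_cons, Multiset.prod_cons, map_mul, ← ih]
    rw [map_sub, map_one, map_mul, map_inv₀, Complex.conj_conj, Complex.conj_conj]
    field_simp
    ring

open Polynomial in
/-- With `P = ∏ (X - α)` and `Q = ∏ (1 - conj α • X)` over `α ∈ s`, the product
`finiteBlaschke ζ s` is `ζ P / Q` and `m_a (ζ P / Q) = (ζ P - a Q) / (Q - conj a ζ P)`;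
this is the numerator. -/
def mobiusBlaschkeNumerator (ζ a : ℂ) (s : Multiset ℂ) : ℂ[X] :=
  C ζ * (s.map fun α => X - C α).prod - C a * (s.map fun α => 1 - C (conj α) * X).prod

namespace mobiusBlaschkeNumerator

open Polynomial

section

variable (ζ a : ℂ) (s : Multiset ℂ)

theorem eval_eq (z : ℂ) : (mobiusBlaschkeNumerator ζ a s).eval z =
    ζ * (s.map fun α => z - α).prod - a * (s.map fun α => 1 - conj α * z).prod := by
  simp [mobiusBlaschkeNumerator, eval_multiset_prod, Multiset.map_map]

theorem eval_eq_leadingCoeff_mul (z : ℂ) :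
    (mobiusBlaschkeNumerator ζ a s).eval z =
      (mobiusBlaschkeNumerator ζ a s).leadingCoeff *
        ((mobiusBlaschkeNumerator ζ a s).roots.map fun β => z - β).prod :=
  (IsAlgClosed.splits _).eval_eq_prod_roots z

theorem natDegree_le_one_of_mem :
    ∀ p ∈ s.map fun α => 1 - C (conj α) * X, p.natDegree ≤ 1 := fun p hp => by
  obtain ⟨α, -, rfl⟩ := Multiset.mem_map.1 hp
  compute_degree

theorem natDegree_le : (mobiusBlaschkeNumerator ζ a s).natDegree ≤ Multiset.card s := by
  have hP : ((s.map fun α => X - C α).prod).natDegree = Multiset.card s :=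
    natDegree_multiset_prod_X_sub_C_eq_card s
  have hQ : ((s.map fun α => 1 - C (conj α) * X).prod).natDegree ≤ Multiset.card s := by
    refine (natDegree_multiset_prod_le _).trans ?_
    simpa using Multiset.sum_le_card_nsmul ((s.map fun α => 1 - C (conj α) * X).map natDegree) 1
      (by simpa using natDegree_le_one_of_mem s)
  exact (natDegree_sub_le_of_le ((natDegree_C_mul_le _ _).trans hP.le)
    ((natDegree_C_mul_le _ _).trans hQ)).trans (max_self _).le

theorem coeff_card : (mobiusBlaschkeNumerator ζ a s).coeff (Multiset.card s) =
    ζ - a * (s.map fun α => -conj α).prod := by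
  have hP := (monic_multisetProd_X_sub_C s).coeff_natDegree
  rw [natDegree_multiset_prod_X_sub_C_eq_card] at hP
  have hQ := coeff_multiset_prod_of_natDegree_le _ 1 (natDegree_le_one_of_mem s)
  rw [Multiset.card_map, mul_one, Multiset.map_map] at hQ
  rw [mobiusBlaschkeNumerator, coeff_sub, coeff_C_mul, coeff_C_mul, hP, hQ]
  simp [coeff_one]

end

variable {ζ a : ℂ} {s : Multiset ℂ} (hζ : ‖ζ‖ = 1) (ha : ‖a‖ < 1) (hs : ∀ α ∈ s, ‖α‖ < 1)
include hζ ha hs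

theorem eval_ne_zero {z : ℂ} (hz : 1 ≤ ‖z‖) : (mobiusBlaschkeNumerator ζ a s).eval z ≠ 0 := by
  have hPQ : ‖(s.map fun α => 1 - conj α * z).prod‖ ≤ ‖(s.map fun α => z - α).prod‖ := by
    simp only [norm_multiset_prod_map]
    exact Multiset.prod_map_le_prod_map₀ _ _ (fun _ _ => norm_nonneg _)
      fun α hα => norm_one_sub_conj_mul_le_norm_sub (hs α hα) hz
  have hP : 0 < ‖(s.map fun α => z - α).prod‖ := by
    refine norm_pos_iff.2 (Multiset.prod_ne_zero fun h => ?_)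
    obtain ⟨α, hα, hzα⟩ := Multiset.mem_map.1 h
    exact (hs α hα).not_ge (sub_eq_zero.1 hzα ▸ hz)
  rw [eval_eq, sub_ne_zero]
  intro h
  have := congrArg norm h
  rw [norm_mul, norm_mul, hζ, one_mul] at this
  nlinarith [norm_nonneg a]

theorem coeff_card_ne_zero : (mobiusBlaschkeNumerator ζ a s).coeff (Multiset.card s) ≠ 0 := by
  rw [coeff_card, sub_ne_zero]
  refine ne_of_apply_ne norm (ne_of_gt ?_)
  rw [hζ, norm_mul, norm_multiset_prod_map]
  have hprod : (s.map fun α => ‖-conj α‖).prod ≤ (s.map fun _ => (1 : ℝ)).prod :=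
    Multiset.prod_map_le_prod_map₀ _ _ (fun _ _ => norm_nonneg _)
      fun α hα => by simpa using (hs α hα).le
  rw [Multiset.map_const', Multiset.prod_replicate, one_pow] at hprod
  nlinarith [norm_nonneg a, Multiset.prod_map_nonneg (s := s) fun α _ => norm_nonneg (-conj α)]

theorem natDegree_eq : (mobiusBlaschkeNumerator ζ a s).natDegree = Multiset.card s :=
  (natDegree_le ζ a s).antisymm (le_natDegree_of_ne_zero (coeff_card_ne_zero hζ ha hs))

theorem leadingCoeff_eq :
    (mobiusBlaschkeNumerator ζ a s).leadingCoeff = ζ - a * (s.map fun α => -conj α).prod := by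
  rw [leadingCoeff, natDegree_eq hζ ha hs, coeff_card]

theorem card_roots : Multiset.card (mobiusBlaschkeNumerator ζ a s).roots = Multiset.card s :=
  IsAlgClosed.card_roots_eq_natDegree.trans (natDegree_eq hζ ha hs)

theorem norm_lt_one_of_mem_roots {β : ℂ} (hβ : β ∈ (mobiusBlaschkeNumerator ζ a s).roots) :
    ‖β‖ < 1 :=
  not_le.1 fun h => eval_ne_zero hζ ha hs h (mem_roots'.1 hβ).2

/-- Up to the factor `ζ`, the denominator `Q - conj a ζ P` of `m_a (ζ P / Q)` is the reflection
`z ^ k * conj (N (conj z)⁻¹)` of the numerator `N`, so it factors over the roots of `N`. -/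
theorem conj_mul_sub_conj_mul_eq (z : ℂ) :
    conj ζ * (s.map fun α => 1 - conj α * z).prod - conj a * (s.map fun α => z - α).prod =
      conj (mobiusBlaschkeNumerator ζ a s).leadingCoeff *
        ((mobiusBlaschkeNumerator ζ a s).roots.map fun β => 1 - conj β * z).prod := by
  rcases eq_or_ne z 0 with rfl | hz
  · simp [leadingCoeff_eq hζ ha hs, map_multiset_prod, Multiset.map_map]
  have h := congrArg (fun y => z ^ Multiset.card s * conj y)
    ((eval_eq ζ a s (conj z)⁻¹).symm.trans (eval_eq_leadingCoeff_mul ζ a s _))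
  simp only [map_sub, map_mul, mul_sub] at h
  rwa [mul_left_comm, mul_left_comm _ (conj a), pow_card_mul_conj_prod_inv_sub hz,
    pow_card_mul_conj_prod_one_sub hz, mul_left_comm, ← card_roots hζ ha hs,
    pow_card_mul_conj_prod_inv_sub hz] at h

end mobiusBlaschkeNumerator

open mobiusBlaschkeNumerator in
theorem exists_mobius_comp_finiteBlaschke_eq {ζ a : ℂ} {s : Multiset ℂ} (hζ : ‖ζ‖ = 1)
    (ha : ‖a‖ < 1) (hs : ∀ α ∈ s, ‖α‖ < 1) :
    ∃ (ζ' : ℂ) (t : Multiset ℂ), ‖ζ'‖ = 1 ∧ Multiset.card t = Multiset.card s ∧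
      (∀ β ∈ t, ‖β‖ < 1) ∧
      ∀ z ∈ unitDisc, mobius a (finiteBlaschke ζ s z) = finiteBlaschke ζ' t z := by
  set N := mobiusBlaschkeNumerator ζ a s
  have hc : N.leadingCoeff ≠ 0 := by
    rw [Polynomial.leadingCoeff, natDegree_eq hζ ha hs]
    exact coeff_card_ne_zero hζ ha hs
  have hζζ : ζ * conj ζ = 1 := by
    rw [Complex.mul_conj, Complex.normSq_eq_norm_sq, hζ]; norm_num
  refine ⟨N.leadingCoeff / (ζ * conj N.leadingCoeff), N.roots, ?_, card_roots hζ ha hs,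
    fun β => norm_lt_one_of_mem_roots hζ ha hs, fun z hz => ?_⟩
  · rw [norm_div, norm_mul, Complex.norm_conj, hζ, one_mul, div_self (norm_ne_zero_iff.2 hc)]
  have hz1 : ‖z‖ ≤ 1 := (mem_unitDisc.1 hz).le
  have hQ := prod_one_sub_conj_mul_ne_zero hs hz1
  have hT := prod_one_sub_conj_mul_ne_zero (fun β => norm_lt_one_of_mem_roots hζ ha hs) hz1
  have hnum := (eval_eq ζ a s z).symm.trans (eval_eq_leadingCoeff_mul ζ a s z)
  have hden := conj_mul_sub_conj_mul_eq hζ ha hs z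
  rw [finiteBlaschke_eq_div, finiteBlaschke_eq_div, mobius]
  generalize (s.map fun α => z - α).prod = P at *
  generalize (s.map fun α => 1 - conj α * z).prod = Q at *
  generalize (N.roots.map fun β => z - β).prod = R at *
  generalize (N.roots.map fun β => 1 - conj β * z).prod = T at *
  have hnum' : ζ * P / Q - a = N.leadingCoeff * R / Q := by
    rw [← hnum]; field_simp
  have hden' : 1 - conj a * (ζ * P / Q) = ζ * conj N.leadingCoeff * T / Q := by
    rw [mul_assoc ζ, ← hden]; field_simp; linear_combination -Q * hζζ
  rw [hnum', hden']
  field_simp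

theorem isBlaschkeOn_zero_iff {B : ℂ → ℂ} :
    IsBlaschkeOn B 0 ↔ ∃ ζ : ℂ, ‖ζ‖ = 1 ∧ ∀ z ∈ unitDisc, B z = ζ := by
  simp [IsBlaschkeOn]

namespace IsBlaschkeOn

variable {B : ℂ → ℂ} {k : ℕ}

theorem congr (hB : IsBlaschkeOn B k) {B' : ℂ → ℂ} (h : EqOn B B' unitDisc) :
    IsBlaschkeOn B' k :=
  let ⟨ζ, α, hζ, hα, hB⟩ := hB
  ⟨ζ, α, hζ, hα, fun z hz => h hz ▸ hB z hz⟩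

theorem mobius_mul (hB : IsBlaschkeOn B k) {a : ℂ} (ha : ‖a‖ < 1) :
    IsBlaschkeOn (fun z => mobius a z * B z) (k + 1) := by
  obtain ⟨ζ, α, hζ, hα, hB⟩ := hB
  refine ⟨ζ, Fin.cons a α, hζ, Fin.cases ha hα, fun z hz => ?_⟩
  simp only [Fin.prod_univ_succ, hB z hz, Fin.cons_zero, Fin.cons_succ]
  ring

theorem norm_lt_one (hB : IsBlaschkeOn B (k + 1)) {z : ℂ} (hz : z ∈ unitDisc) : ‖B z‖ < 1 := by
  obtain ⟨ζ, α, hζ, hα, hB⟩ := hB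
  rw [mem_unitDisc] at hz
  rw [hB z (mem_unitDisc.2 hz), norm_mul, hζ, one_mul, Fin.prod_univ_succ, norm_mul, norm_prod]
  exact mul_lt_one_of_nonneg_of_lt_one_left (norm_nonneg _) (norm_mobius_lt_one (hα 0) hz)
    (Finset.prod_le_one (fun _ _ => norm_nonneg _)
      fun j _ => norm_mobius_le_one (hα j.succ) hz.le)

end IsBlaschkeOn

theorem isBlaschkeOn_finiteBlaschke {ζ : ℂ} (hζ : ‖ζ‖ = 1) {s : Multiset ℂ}
    (hs : ∀ α ∈ s, ‖α‖ < 1) : IsBlaschkeOn (finiteBlaschke ζ s) (Multiset.card s) := by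
  induction s using Multiset.induction_on with
  | empty => exact isBlaschkeOn_zero_iff.2 ⟨ζ, hζ, fun z _ => by simp [finiteBlaschke]⟩
  | cons α s ih =>
    rw [Multiset.card_cons]
    refine ((ih fun β hβ => hs β (Multiset.mem_cons_of_mem hβ)).mobius_mul
      (hs α (Multiset.mem_cons_self α s))).congr fun z _ => ?_
    simp only [finiteBlaschke, Multiset.map_cons, Multiset.prod_cons]
    ring

theorem isBlaschkeOn_iff_finiteBlaschke {B : ℂ → ℂ} {k : ℕ} :
    IsBlaschkeOn B k ↔ ∃ (ζ : ℂ) (s : Multiset ℂ), ‖ζ‖ = 1 ∧ Multiset.card s = k ∧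
      (∀ α ∈ s, ‖α‖ < 1) ∧ EqOn B (finiteBlaschke ζ s) unitDisc := by
  constructor
  · rintro ⟨ζ, α, hζ, hα, hB⟩
    refine ⟨ζ, Finset.univ.val.map α, hζ, by simp, by simpa using hα, fun z hz => ?_⟩
    rw [hB z hz, finiteBlaschke, Multiset.map_map, Finset.prod_eq_multiset_prod]
    rfl
  · rintro ⟨ζ, s, hζ, rfl, hs, hB⟩
    exact (isBlaschkeOn_finiteBlaschke hζ hs).congr fun z hz => (hB hz).symm

namespace IsBlaschkeOn

variable {B : ℂ → ℂ} {k : ℕ}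

theorem mobius_comp (hB : IsBlaschkeOn B k) {a : ℂ} (ha : ‖a‖ < 1) :
    IsBlaschkeOn (fun z => mobius a (B z)) k := by
  obtain ⟨ζ, s, hζ, rfl, hs, hB⟩ := isBlaschkeOn_iff_finiteBlaschke.1 hB
  obtain ⟨ζ', t, hζ', ht, hts, hcomp⟩ := exists_mobius_comp_finiteBlaschke_eq hζ ha hs
  rw [← ht]
  exact (isBlaschkeOn_finiteBlaschke hζ' hts).congr fun z hz => by simp only [hB hz, hcomp z hz]

theorem exists_eq_mobius_mul_of_eq_zero (hB : IsBlaschkeOn B (k + 1)) {c : ℂ}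
    (hc : c ∈ unitDisc) (hBc : B c = 0) :
    ∃ B₁, IsBlaschkeOn B₁ k ∧ ∀ z ∈ unitDisc, B z = mobius c z * B₁ z := by
  obtain ⟨ζ, s, hζ, hk, hs, hB⟩ := isBlaschkeOn_iff_finiteBlaschke.1 hB
  have hcs : c ∈ s := by
    rw [hB hc, finiteBlaschke, mul_eq_zero, Multiset.prod_eq_zero_iff, Multiset.mem_map] at hBc
    obtain hζ0 | ⟨α, hα, hαc⟩ := hBc
    · simp [hζ0] at hζ
    · rw [mobius_eq_zero_iff (hs α hα) (mem_unitDisc.1 hc).le] at hαc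
      exact hαc ▸ hα
  have hk' : Multiset.card (s.erase c) = k := by
    rw [Multiset.card_erase_of_mem hcs, hk, Nat.pred_succ]
  refine ⟨finiteBlaschke ζ (s.erase c),
    hk' ▸ isBlaschkeOn_finiteBlaschke hζ fun α hα => hs α (Multiset.mem_of_mem_erase hα),
    fun z hz => ?_⟩
  rw [hB hz, finiteBlaschke, finiteBlaschke, ← Multiset.prod_map_erase hcs]
  ring

theorem exists_mobius_comp_eq_mobius_mul (hB : IsBlaschkeOn B (k + 1)) {c : ℂ}
    (hc : c ∈ unitDisc) :
    ∃ B₁, IsBlaschkeOn B₁ k ∧ ∀ z ∈ unitDisc, mobius (B c) (B z) = mobius c z * B₁ z :=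
  (hB.mobius_comp (hB.norm_lt_one hc)).exists_eq_mobius_mul_of_eq_zero hc (mobius_self _)

end IsBlaschkeOn

/-- For `z ≠ c` this is `m_{φ c} (φ z) / m_c z`: one step of the Schur algorithm. -/
def schurReduction (φ : ℂ → ℂ) (c z : ℂ) : ℂ :=
  (1 - conj c * z) * dslope (fun z => mobius (φ c) (φ z)) c z

section SchurReduction

variable {φ : ℂ → ℂ} {c z : ℂ}

theorem mobius_mul_schurReduction (hz : 1 - conj c * z ≠ 0) :
    mobius c z * schurReduction φ c z = mobius (φ c) (φ z) := by
  have h := sub_smul_dslope (fun z => mobius (φ c) (φ z)) c z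
  rw [smul_eq_mul, mobius_self, sub_zero] at h
  rw [schurReduction, mobius, ← h, div_mul_eq_mul_div, mul_left_comm, mul_div_assoc,
    mul_div_cancel₀ _ hz]

theorem mobius_neg_mobius_mul_schurReduction (hc : ‖φ c‖ < 1) (hφz : ‖φ z‖ ≤ 1)
    (hz : 1 - conj c * z ≠ 0) : mobius (-φ c) (mobius c z * schurReduction φ c z) = φ z := by
  rw [mobius_mul_schurReduction hz, mobius_neg_mobius hc hφz]

theorem DifferentiableOn.schurReduction {U : Set ℂ} (hU : IsOpen U) (hc : c ∈ U)
    (hφ : DifferentiableOn ℂ φ U) (hφU : MapsTo φ U unitDisc) :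
    DifferentiableOn ℂ (schurReduction φ c) U := by
  have hm : DifferentiableOn ℂ (fun z => mobius (φ c) (φ z)) U := hφ.mobius_comp fun z hz =>
    one_sub_conj_mul_ne_zero (mem_unitDisc.1 (hφU hc)) (mem_unitDisc.1 (hφU hz)).le
  exact ((differentiableOn_const 1).sub (differentiableOn_id.const_mul _)).mul
    ((Complex.differentiableOn_dslope (hU.mem_nhds hc)).2 hm)

/-- Schwarz–Pick: the Schwarz lemma for `m_{φ c} ∘ φ ∘ m_{-c}`. -/
theorem norm_mobius_apply_le_norm_mobius (hφ : DifferentiableOn ℂ φ unitDisc)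
    (hφD : MapsTo φ unitDisc unitDisc) (hc : c ∈ unitDisc) (hz : z ∈ unitDisc) :
    ‖mobius (φ c) (φ z)‖ ≤ ‖mobius c z‖ := by
  have hc' : ‖-c‖ < 1 := by rw [norm_neg]; exact mem_unitDisc.1 hc
  have hm : MapsTo (mobius (-c)) unitDisc unitDisc := fun u hu =>
    mem_unitDisc.2 (norm_mobius_lt_one hc' (mem_unitDisc.1 hu))
  have hψ : DifferentiableOn ℂ (fun u => φ (mobius (-c) u)) unitDisc :=
    hφ.comp (differentiableOn_id.mobius_comp fun u hu =>
      one_sub_conj_mul_ne_zero hc' (mem_unitDisc.1 hu).le) hm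
  have hwc := mem_unitDisc.1 (hφD hc)
  have h := Complex.norm_le_norm_of_mapsTo_ball
    (f := fun u => mobius (φ c) (φ (mobius (-c) u)))
    (hψ.mobius_comp fun u hu => one_sub_conj_mul_ne_zero hwc (mem_unitDisc.1 (hφD (hm hu))).le)
    (fun u hu => ball_subset_closedBall
      (mem_unitDisc.2 (norm_mobius_lt_one hwc (mem_unitDisc.1 (hφD (hm hu))))))
    (by simp) (norm_mobius_lt_one (mem_unitDisc.1 hc) (mem_unitDisc.1 hz))
  rwa [mobius_neg_mobius (mem_unitDisc.1 hc) (mem_unitDisc.1 hz).le] at h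

theorem norm_schurReduction_le_one (hφ : DifferentiableOn ℂ φ unitDisc)
    (hφD : MapsTo φ unitDisc unitDisc) (hc : c ∈ unitDisc) (hz : z ∈ unitDisc) :
    ‖schurReduction φ c z‖ ≤ 1 := by
  have hle : ∀ y ∈ unitDisc, y ≠ c → ‖schurReduction φ c y‖ ≤ 1 := fun y hy hyc => by
    have hpos : 0 < ‖mobius c y‖ := norm_pos_iff.2 fun h =>
      hyc ((mobius_eq_zero_iff (mem_unitDisc.1 hc) (mem_unitDisc.1 hy).le).1 h)
    have h := congrArg norm (mobius_mul_schurReduction (φ := φ)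
      (one_sub_conj_mul_ne_zero (mem_unitDisc.1 hc) (mem_unitDisc.1 hy).le))
    rw [norm_mul] at h
    refine le_of_mul_le_mul_left ?_ hpos
    rw [h, mul_one]
    exact norm_mobius_apply_le_norm_mobius hφ hφD hc hy
  rcases ne_or_eq z c with hzc | rfl
  · exact hle z hz hzc
  have hcont : ContinuousAt (schurReduction φ z) z :=
    ((hφ.schurReduction isOpen_ball hz hφD).differentiableAt (isOpen_ball.mem_nhds hz)).continuousAt
  refine le_of_tendsto (x := 𝓝[≠] z) (hcont.norm.tendsto.mono_left nhdsWithin_le_nhds) ?_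
  filter_upwards [self_mem_nhdsWithin, mem_nhdsWithin_of_mem_nhds (isOpen_ball.mem_nhds hz)]
    with y hyz hy
  exact hle y hy hyz

end SchurReduction

theorem mapsTo_unitDisc_or_isBlaschkeOn_zero {K : ℂ → ℂ} (hK : DifferentiableOn ℂ K unitDisc)
    (hK1 : ∀ z ∈ unitDisc, ‖K z‖ ≤ 1) : MapsTo K unitDisc unitDisc ∨ IsBlaschkeOn K 0 := by
  refine or_iff_not_imp_left.2 fun h => ?_
  obtain ⟨z₀, hz₀, hKz₀⟩ := not_forall₂.1 h
  have hnorm : ‖K z₀‖ = 1 := (hK1 z₀ hz₀).antisymm (not_lt.1 (mt mem_unitDisc.2 hKz₀))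
  have hconst := Complex.eq_const_of_exists_max hK hz₀ fun z hz => by
    simpa [hnorm] using hK1 z hz
  exact isBlaschkeOn_zero_iff.2 ⟨K z₀, hnorm, fun z hz => hconst hz⟩

/-- `h ∈ O(cl 𝔻, D)`. -/
def IsHolomorphicNearClosedDisc (h : ℂ → E) (D : Set E) : Prop :=
  ∃ U : Set ℂ, IsOpen U ∧ closedBall (0 : ℂ) 1 ⊆ U ∧ DifferentiableOn ℂ h U ∧ MapsTo h U D

theorem weakExtremalFor_iff {D : Set E} {f : ℂ → E} {m : ℕ} {lam : Fin m → ℂ} :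
    WeakExtremalFor D f lam ↔
      ¬ ∃ h, IsHolomorphicNearClosedDisc h D ∧ ∀ j, h (lam j) = f (lam j) :=
  not_congr ⟨fun ⟨U, h, hU, hUc, hd, hD, hi⟩ => ⟨h, ⟨U, hU, hUc, hd, hD⟩, hi⟩,
    fun ⟨h, ⟨U, hU, hUc, hd, hD⟩, hi⟩ => ⟨U, h, hU, hUc, hd, hD, hi⟩⟩

namespace IsHolomorphicNearClosedDisc

variable {h : ℂ → E} {D : Set E}

theorem of_mapsTo_closedBall (hD : IsOpen D) {U : Set ℂ} (hU : IsOpen U)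
    (hUc : closedBall (0 : ℂ) 1 ⊆ U) (hh : DifferentiableOn ℂ h U)
    (hmaps : MapsTo h (closedBall 0 1) D) : IsHolomorphicNearClosedDisc h D :=
  ⟨U ∩ h ⁻¹' D, hh.continuousOn.isOpen_inter_preimage hU hD, subset_inter hUc hmaps,
    hh.mono inter_subset_left, fun _ hz => hz.2⟩

theorem const {c : E} (hc : c ∈ D) : IsHolomorphicNearClosedDisc (fun _ => c) D :=
  ⟨univ, isOpen_univ, subset_univ _, differentiableOn_const c, fun _ _ => hc⟩

theorem comp {E' : Type*} [NormedAddCommGroup E'] [NormedSpace ℂ E'] {F : E → E'} {D' : Set E'}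
    (hh : IsHolomorphicNearClosedDisc h D) (hF : DifferentiableOn ℂ F D) (hFD : MapsTo F D D') :
    IsHolomorphicNearClosedDisc (fun z => F (h z)) D' :=
  let ⟨U, hU, hUc, hhU, hhD⟩ := hh
  ⟨U, hU, hUc, hF.comp hhU hhD, hFD.comp hhD⟩

theorem pi {ι : Type*} [Fintype ι] {E' : ι → Type*} [∀ j, NormedAddCommGroup (E' j)]
    [∀ j, NormedSpace ℂ (E' j)] {g : ∀ j, ℂ → E' j} {D' : ∀ j, Set (E' j)}
    (hg : ∀ j, IsHolomorphicNearClosedDisc (g j) (D' j)) :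
    IsHolomorphicNearClosedDisc (fun z j => g j z) (univ.pi D') := by
  choose U hU hUc hgU hgD using hg
  exact ⟨⋂ j, U j, isOpen_iInter_of_finite hU, subset_iInter hUc,
    differentiableOn_pi.2 fun j => (hgU j).mono (iInter_subset _ j),
    fun z hz j _ => hgD j (mem_iInter.1 hz j)⟩

theorem mobius_comp {g : ℂ → ℂ} (hg : IsHolomorphicNearClosedDisc g unitDisc) {a : ℂ}
    (ha : ‖a‖ < 1) : IsHolomorphicNearClosedDisc (fun z => mobius a (g z)) unitDisc :=
  let ⟨U, hU, hUc, hgU, hgD⟩ := hg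
  ⟨U, hU, hUc, hgU.mobius_comp fun _ hz => one_sub_conj_mul_ne_zero ha (mem_unitDisc.1 (hgD hz)).le,
    fun _ hz => mem_unitDisc.2 (norm_mobius_lt_one ha (mem_unitDisc.1 (hgD hz)))⟩

theorem mobius_mul {g : ℂ → ℂ} (hg : IsHolomorphicNearClosedDisc g unitDisc) {c : ℂ}
    (hc : ‖c‖ < 1) : IsHolomorphicNearClosedDisc (fun z => mobius c z * g z) unitDisc := by
  obtain ⟨U, hU, hUc, hgU, hgD⟩ := hg
  refine of_mapsTo_closedBall isOpen_ball (hU.inter (isOpen_setOf_one_sub_conj_mul_ne_zero c))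
    (subset_inter hUc fun _ hz => one_sub_conj_mul_ne_zero hc (mem_closedBall_zero_iff.1 hz))
    ((differentiableOn_id.mobius_comp fun _ hz => hz.2).mul (hgU.mono inter_subset_left))
    fun z hz => mem_unitDisc.2 ?_
  rw [norm_mul]
  exact mul_lt_one_of_nonneg_of_lt_one_right (norm_mobius_le_one hc (mem_closedBall_zero_iff.1 hz))
    (norm_nonneg _) (mem_unitDisc.1 (hgD (hUc hz)))

theorem schurReduction {g : ℂ → ℂ} (hg : IsHolomorphicNearClosedDisc g unitDisc) {c : ℂ}
    (hc : c ∈ unitDisc) : IsHolomorphicNearClosedDisc (_root_.schurReduction g c) unitDisc := by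
  obtain ⟨U, hU, hUc, hgU, hgD⟩ := hg
  set U₀ := U ∩ {z | 1 - conj c * z ≠ 0}
  have hU₀ : IsOpen U₀ := hU.inter (isOpen_setOf_one_sub_conj_mul_ne_zero c)
  have hU₀c : closedBall (0 : ℂ) 1 ⊆ U₀ := subset_inter hUc fun _ hz =>
    one_sub_conj_mul_ne_zero (mem_unitDisc.1 hc) (mem_closedBall_zero_iff.1 hz)
  have hK : DifferentiableOn ℂ (_root_.schurReduction g c) U₀ :=
    (hgU.mono inter_subset_left).schurReduction hU₀ (hU₀c (ball_subset_closedBall hc))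
      (hgD.mono_left inter_subset_left)
  refine of_mapsTo_closedBall isOpen_ball hU₀ hU₀c hK fun z hz => mem_unitDisc.2 ?_
  rw [← closure_ball (0 : ℂ) one_ne_zero] at hz hU₀c
  refine norm_lt_of_forall_mem_frontier_norm_lt isBounded_ball ⟨0, mem_ball_self one_pos⟩
    (hK.mono hU₀c).diffContOnCl (fun w hw => ?_) hz
  rw [frontier_ball (0 : ℂ) one_ne_zero, mem_sphere_zero_iff_norm] at hw
  have hwU₀ : w ∈ U₀ :=
    hU₀c (by rw [closure_ball (0 : ℂ) one_ne_zero, mem_closedBall_zero_iff, hw])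
  have h := congrArg norm (mobius_mul_schurReduction (φ := g) hwU₀.2)
  rw [norm_mul, norm_mobius_eq_one (mem_unitDisc.1 hc) hw, one_mul] at h
  rw [h]
  exact norm_mobius_lt_one (mem_unitDisc.1 (hgD (hUc (ball_subset_closedBall hc))))
    (mem_unitDisc.1 (hgD hwU₀.1))

end IsHolomorphicNearClosedDisc

theorem IsBlaschkeOn.exists_apply_ne {B : ℂ → ℂ} {k : ℕ} (hB : IsBlaschkeOn B k) {G : ℂ → ℂ}
    (hG : IsHolomorphicNearClosedDisc G unitDisc) {lam : Fin (k + 1) → ℂ}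
    (hinj : Function.Injective lam) (hmem : ∀ i, lam i ∈ unitDisc) :
    ∃ i, G (lam i) ≠ B (lam i) := by
  induction k generalizing B G with
  | zero =>
    obtain ⟨ζ, hζ, hB⟩ := isBlaschkeOn_zero_iff.1 hB
    obtain ⟨U, -, hUc, -, hGD⟩ := hG
    refine ⟨0, fun h => ?_⟩
    have := mem_unitDisc.1 (hGD (hUc (ball_subset_closedBall (hmem 0))))
    rw [h, hB _ (hmem 0), hζ] at this
    exact lt_irrefl _ this
  | succ k ih =>
    by_contra! hint
    obtain ⟨B₁, hB₁, hfac⟩ := hB.exists_mobius_comp_eq_mobius_mul (hmem 0)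
    obtain ⟨i, hi⟩ := ih hB₁ (hG.schurReduction (hmem 0)) (hinj.comp (Fin.succ_injective _))
      fun i => hmem i.succ
    have hz := hmem i.succ
    have hne : mobius (lam 0) (lam i.succ) ≠ 0 := by
      rw [Ne, mobius_eq_zero_iff (mem_unitDisc.1 (hmem 0)) (mem_unitDisc.1 hz).le]
      exact hinj.ne (Fin.succ_ne_zero i)
    refine hi (mul_left_cancel₀ hne ?_)
    rw [Function.comp_apply, mobius_mul_schurReduction
      (one_sub_conj_mul_ne_zero (mem_unitDisc.1 (hmem 0)) (mem_unitDisc.1 hz).le),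
      hint, hint, ← hfac _ hz]

theorem exists_interpolant_or_isBlaschkeOn {φ : ℂ → ℂ} (hφ : DifferentiableOn ℂ φ unitDisc)
    (hφD : MapsTo φ unitDisc unitDisc) {m : ℕ} {lam : Fin m → ℂ}
    (hinj : Function.Injective lam) (hmem : ∀ i, lam i ∈ unitDisc) :
    (∃ g, IsHolomorphicNearClosedDisc g unitDisc ∧ ∀ i, g (lam i) = φ (lam i)) ∨
      ∃ k, 1 ≤ k ∧ k + 1 ≤ m ∧ IsBlaschkeOn φ k := by
  induction m generalizing φ with
  | zero => exact .inl ⟨fun _ => 0, .const (mem_unitDisc.2 (by simp)), finZeroElim⟩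
  | succ m ih =>
    set c := lam 0
    have hc := mem_unitDisc.1 (hmem 0)
    have hw : ‖-φ c‖ < 1 := by rw [norm_neg]; exact mem_unitDisc.1 (hφD (hmem 0))
    have hrec : EqOn (fun z => mobius (-φ c) (mobius c z * schurReduction φ c z)) φ unitDisc :=
      fun z hz => mobius_neg_mobius_mul_schurReduction (mem_unitDisc.1 (hφD (hmem 0)))
        (mem_unitDisc.1 (hφD hz)).le (one_sub_conj_mul_ne_zero hc (mem_unitDisc.1 hz).le)
    have hKd := hφ.schurReduction isOpen_ball (hmem 0) hφD
    rcases mapsTo_unitDisc_or_isBlaschkeOn_zero hKd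
      (fun z hz => norm_schurReduction_le_one hφ hφD (hmem 0) hz) with hKD | hK0
    · rcases ih hKd hKD (hinj.comp (Fin.succ_injective _)) (fun i => hmem i.succ) with
        ⟨g, hg, hgK⟩ | ⟨k, hk1, hkm, hKB⟩
      · refine .inl ⟨fun z => mobius (-φ c) (mobius c z * g z), (hg.mobius_mul hc).mobius_comp hw,
          Fin.cases (by simp [c]) fun i => ?_⟩
        exact (congrArg (fun v => mobius (-φ c) (mobius c (lam i.succ) * v)) (hgK i)).trans
          (hrec (hmem i.succ))
      · exact .inr ⟨k + 1, by omega, by omega, ((hKB.mobius_mul hc).mobius_comp hw).congr hrec⟩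
    · rcases m with _ | m
      · exact .inl ⟨fun _ => φ c, .const (hφD (hmem 0)), fun i => by rw [Fin.eq_zero i]⟩
      · exact .inr ⟨1, le_rfl, by omega, ((hK0.mobius_mul hc).mobius_comp hw).congr hrec⟩

theorem exists_injective_mem_unitDisc (m : ℕ) :
    ∃ lam : Fin m → ℂ, Function.Injective lam ∧ ∀ i, lam i ∈ unitDisc := by
  have hm : (m + 1 : ℂ) ≠ 0 := Nat.cast_add_one_ne_zero m
  refine ⟨fun i => (i : ℂ) / (m + 1), fun i j hij => ?_, fun i => mem_unitDisc.2 ?_⟩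
  · simpa [div_left_inj' hm, Fin.val_inj] using hij
  · rw [norm_div, ← Nat.cast_add_one, Complex.norm_natCast, Complex.norm_natCast,
      div_lt_one (by positivity)]
    exact_mod_cast i.isLt.trans m.lt_succ_self

theorem IsExtremal.isWeakExtremal {D : Set E} {f : ℂ → E} {m : ℕ} (hf : IsExtremal D f m) :
    IsWeakExtremal D f m :=
  let ⟨lam, hinj, hmem⟩ := exists_injective_mem_unitDisc m
  ⟨lam, hinj, hmem, hf lam hinj hmem⟩

theorem IsGeodesic.isExtremal {D : Set E} {f : ℂ → E} {m : ℕ} (hf : IsGeodesic D f m) :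
    IsExtremal D f m := by
  obtain ⟨F, hFd, hFD, k, hk1, hkm, hB⟩ := hf
  intro lam hinj hmem
  rw [weakExtremalFor_iff]
  rintro ⟨h, hh, hint⟩
  have hkm' : k + 1 ≤ m := by omega
  obtain ⟨i, hi⟩ := hB.exists_apply_ne (hh.comp hFd hFD)
    (hinj.comp (Fin.castLE_injective hkm')) fun i => hmem _
  exact hi (congrArg F (hint _))

theorem WeakExtremalFor.exists_apply {ι : Type*} [Fintype ι] {E' : ι → Type*}
    [∀ j, NormedAddCommGroup (E' j)] [∀ j, NormedSpace ℂ (E' j)] {D : ∀ j, Set (E' j)}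
    {f : ℂ → ∀ j, E' j} {m : ℕ} {lam : Fin m → ℂ} (hf : WeakExtremalFor (univ.pi D) f lam) :
    ∃ j, WeakExtremalFor (D j) (fun z => f z j) lam := by
  by_contra! h
  simp only [weakExtremalFor_iff, not_not] at h
  choose g hg hint using h
  exact weakExtremalFor_iff.1 hf ⟨fun z j => g j z, .pi hg, fun i => funext fun j => hint j i⟩

theorem IsWeakExtremal.exists_isBlaschkeOn_apply {ι : Type*} [Fintype ι] {f : ℂ → ι → ℂ}
    (hf : DifferentiableOn ℂ f unitDisc) (hfD : MapsTo f unitDisc (univ.pi fun _ => unitDisc))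
    {m : ℕ} (hw : IsWeakExtremal (univ.pi fun _ => unitDisc) f m) :
    ∃ j k, 1 ≤ k ∧ k + 1 ≤ m ∧ IsBlaschkeOn (fun z => f z j) k := by
  obtain ⟨lam, hinj, hmem, hlam⟩ := hw
  obtain ⟨j, hj⟩ := hlam.exists_apply
  rcases exists_interpolant_or_isBlaschkeOn (differentiableOn_pi.1 hf j)
    (fun z hz => hfD hz j (mem_univ j)) hinj hmem with hg | ⟨k, hB⟩
  · exact absurd hg (weakExtremalFor_iff.1 hj)
  · exact ⟨j, k, hB⟩

theorem isGeodesic_of_isBlaschkeOn_apply {ι : Type*} [Fintype ι] {f : ℂ → ι → ℂ} {m : ℕ} {j : ι}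
    {k : ℕ} (hk : 1 ≤ k) (hkm : k ≤ m - 1) (hB : IsBlaschkeOn (fun z => f z j) k) :
    IsGeodesic (univ.pi fun _ => unitDisc) f m :=
  ⟨fun v => v j, (differentiable_apply j).differentiableOn, fun _ hv => hv j (mem_univ j),
    k, hk, hkm, hB⟩

theorem polydisc_weak_extremal_tfae_general
    {n : ℕ} (P : Set (Fin n → ℂ)) (hP : P = {z | ∀ j, ‖z j‖ < 1})
    (m : ℕ)
    (f : ℂ → Fin n → ℂ) (hf : DifferentiableOn ℂ f unitDisc)
    (hfD : Set.MapsTo f unitDisc P) :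
    (IsWeakExtremal P f m ↔ IsExtremal P f m) ∧
    (IsWeakExtremal P f m ↔ IsGeodesic P f m) ∧
    (IsWeakExtremal P f m ↔
      ∃ (j : Fin n) (k : ℕ), 1 ≤ k ∧ k ≤ m - 1 ∧ IsBlaschkeOn (fun z => f z j) k) := by
  obtain rfl : P = univ.pi fun _ => unitDisc := hP.trans (by ext; simp [mem_unitDisc])
  have hAD (h : IsWeakExtremal _ f m) :
      ∃ (j : Fin n) (k : ℕ), 1 ≤ k ∧ k ≤ m - 1 ∧ IsBlaschkeOn (fun z => f z j) k :=
    let ⟨j, k, hk, hkm, hB⟩ := h.exists_isBlaschkeOn_apply hf hfD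
    ⟨j, k, hk, by omega, hB⟩
  have hDC : (∃ (j : Fin n) (k : ℕ), 1 ≤ k ∧ k ≤ m - 1 ∧ IsBlaschkeOn (fun z => f z j) k) →
      IsGeodesic _ f m := fun ⟨_, _, hk, hkm, hB⟩ => isGeodesic_of_isBlaschkeOn_apply hk hkm hB
  exact ⟨⟨fun h => (hDC (hAD h)).isExtremal, IsExtremal.isWeakExtremal⟩,
    ⟨fun h => hDC (hAD h), fun h => h.isExtremal.isWeakExtremal⟩,
    ⟨hAD, fun h => (hDC h).isExtremal.isWeakExtremal⟩⟩

/-- For a holomorphic map `f : 𝔻 → 𝔻ⁿ` into the polydisc the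
following are equivalent: `f` is a weak `m`-extremal; `f` is an `m`-extremal;
`f` is an `m`-geodesic; some coordinate `f_j` is a non-constant Blaschke product
of degree at most `m-1`. -/
theorem polydisc_weak_extremal_tfae
    {n : ℕ} (P : Set (Fin n → ℂ)) (hP : P = {z | ∀ j, ‖z j‖ < 1})
    (m : ℕ) (hm : 2 ≤ m)
    (f : ℂ → Fin n → ℂ) (hf : DifferentiableOn ℂ f unitDisc)
    (hfD : Set.MapsTo f unitDisc P) :
    (IsWeakExtremal P f m ↔ IsExtremal P f m) ∧
    (IsWeakExtremal P f m ↔ IsGeodesic P f m) ∧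
    (IsWeakExtremal P f m ↔
      ∃ (j : Fin n) (k : ℕ), 1 ≤ k ∧ k ≤ m - 1 ∧ IsBlaschkeOn (fun z => f z j) k) :=
  polydisc_weak_extremal_tfae_general P hP m f hf hfD
end
end
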